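/- arXiv:0811.2899 — 3 statements merged into one kernel-verified Lean document; each statement's English description precedes it below -/
import Mathlib

section
/- For the step set S = {(0,1),(0,-1)} (up and down steps confined to ℕ²), the total number of walks of length n starting at the origin equals the central binomial coefficient C(n, ⌊n/2⌋). -/
open Finset

/-- Number of `n`-step walks in the quarter plane from the origin to `p`,
with steps from `S`; walks must stay in `ℕ²`. -/
def walkCount (S : Finset (ℤ × ℤ)) : ℕ → ℤ × ℤ → ℕ
  | 0, p => if p = (0, 0) then 1 else 0
  | n + 1, p =>
      if 0 ≤ p.1 ∧ 0 ≤ p.2 then ∑ s ∈ S, walkCount S n (p - s) else 0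

/-- Total number of `n`-step quarter-plane walks starting at the origin. -/
def totalCount (S : Finset (ℤ × ℤ)) (n : ℕ) : ℕ :=
  ∑ i ∈ Finset.range (n + 1), ∑ j ∈ Finset.range (n + 1),
    walkCount S n ((i : ℤ), (j : ℤ))


/-!
Both steps leave the first coordinate at `0`, so a walk is a path of `±1` steps on `ℕ` recorded by
its height. Let `T(n, j)` be the number of such paths of length `n` ending at height `≥ j`. A path
ending at height `≥ j + 1` is a path ending at `≥ j` followed by an up step or a path ending at
`≥ j + 2` followed by a down step, so `T(n + 1, j + 1) = T(n, j) + T(n, j + 2)`; every path can be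
prolonged by an up step and those ending at height `≥ 1` also by a down step, so
`T(n + 1, 0) = T(n, 0) + T(n, 1)`. Pascal's rule shows that `T(n, j) = C(n, ⌊(n + j + 1)/2⌋)`
satisfies these recursions, and the total is `T(n, 0) = C(n, ⌈n/2⌉) = C(n, ⌊n/2⌋)`.
-/

namespace UpDown

lemma walkCount_eq_zero_of_fst_ne_zero {a : ℤ} (ha : a ≠ 0) (n : ℕ) (b : ℤ) :
    walkCount {(0, 1), (0, -1)} n (a, b) = 0 := by
  induction n generalizing b with
  | zero => simp [walkCount, ha]
  | succ n ih =>
    rw [walkCount]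
    split_ifs
    · rw [Finset.sum_pair (by decide)]
      simpa using ⟨ih (b - 1), ih (b + 1)⟩
    · rfl

lemma walkCount_eq_zero_of_snd_neg {b : ℤ} (hb : b < 0) (n : ℕ) (a : ℤ) :
    walkCount {(0, 1), (0, -1)} n (a, b) = 0 := by
  cases n with
  | zero => simp [walkCount, hb.ne]
  | succ n => simp [walkCount, hb.not_ge]

lemma walkCount_succ {a b : ℤ} (ha : 0 ≤ a) (hb : 0 ≤ b) (n : ℕ) :
    walkCount {(0, 1), (0, -1)} (n + 1) (a, b) =
      walkCount {(0, 1), (0, -1)} n (a, b - 1) + walkCount {(0, 1), (0, -1)} n (a, b + 1) := by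
  rw [walkCount, if_pos ⟨ha, hb⟩, Finset.sum_pair (by decide)]
  simp [sub_eq_add_neg]

def heightCount (n j : ℕ) : ℕ :=
  walkCount {(0, 1), (0, -1)} n (0, j)

lemma heightCount_zero (j : ℕ) : heightCount 0 j = if j = 0 then 1 else 0 := by
  simp [heightCount, walkCount]

lemma heightCount_succ_zero (n : ℕ) : heightCount (n + 1) 0 = heightCount n 1 := by
  rw [heightCount, Nat.cast_zero, walkCount_succ le_rfl le_rfl,
    walkCount_eq_zero_of_snd_neg (by norm_num), zero_add, zero_add]
  rfl

lemma heightCount_succ_succ (n j : ℕ) :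
    heightCount (n + 1) (j + 1) = heightCount n j + heightCount n (j + 2) := by
  rw [heightCount, walkCount_succ le_rfl (by positivity)]
  simp only [heightCount]
  push_cast
  rw [add_sub_cancel_right, add_assoc, one_add_one_eq_two]

lemma totalCount_eq_sum_heightCount (n : ℕ) :
    totalCount {(0, 1), (0, -1)} n = ∑ j ∈ range (n + 1), heightCount n j := by
  rw [totalCount, Finset.sum_eq_single_of_mem 0 (by simp)]
  · rfl
  · intro i _ hi
    exact Finset.sum_eq_zero fun j _ => walkCount_eq_zero_of_fst_ne_zero (by exact_mod_cast hi) _ _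

lemma choose_half_succ_eq_choose_half (n : ℕ) : n.choose ((n + 1) / 2) = n.choose (n / 2) :=
  Nat.choose_symm_of_eq_add (by omega)

lemma sum_heightCount_succ_shift (n j N : ℕ) :
    ∑ i ∈ range N, heightCount (n + 1) (j + 1 + i) =
      ∑ i ∈ range N, heightCount n (j + i) + ∑ i ∈ range N, heightCount n (j + 2 + i) := by
  simp only [add_right_comm _ 1, heightCount_succ_succ, Finset.sum_add_distrib]

lemma sum_heightCount_succ (n M : ℕ) :
    ∑ i ∈ range (M + 1), heightCount (n + 1) i =
      ∑ i ∈ range M, heightCount n i + ∑ i ∈ range (M + 1), heightCount n (1 + i) := by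
  rw [Finset.sum_range_succ', Finset.sum_range_succ' (fun i => heightCount n (1 + i))]
  simp only [heightCount_succ_succ, heightCount_succ_zero, Finset.sum_add_distrib, add_comm 1,
    add_assoc, one_add_one_eq_two]

/-- `n + 1 ≤ j + N` makes the heights `j, …, j + N - 1` reach past `n`, the largest height of a
path of length `n`. -/
lemma sum_heightCount_eq_choose {n j N : ℕ} (hN : n + 1 ≤ j + N) :
    ∑ i ∈ range N, heightCount n (j + i) = n.choose ((n + j + 1) / 2) := by
  induction n generalizing j N with
  | zero =>
    rcases j with _ | j
    · obtain ⟨M, rfl⟩ : ∃ M, N = M + 1 := ⟨N - 1, by omega⟩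
      simp [heightCount_zero]
    · rw [Nat.choose_eq_zero_of_lt (by omega)]
      exact Finset.sum_eq_zero fun i _ => by simp [heightCount_zero]
  | succ n ih =>
    rcases j with _ | j
    · obtain ⟨M, rfl⟩ : ∃ M, N = M + 1 := ⟨N - 1, by omega⟩
      have h0 := ih (j := 0) (N := M) (by omega)
      have h1 := ih (j := 1) (N := M + 1) (by omega)
      simp only [zero_add, add_zero] at h0 h1 ⊢
      rw [sum_heightCount_succ, h0, h1, choose_half_succ_eq_choose_half,
        show (n + 1 + 1) / 2 = n / 2 + 1 by omega, ← Nat.choose_succ_succ']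
    · rw [sum_heightCount_succ_shift, ih (by omega), ih (by omega),
        show (n + (j + 2) + 1) / 2 = (n + j + 1) / 2 + 1 by omega, ← Nat.choose_succ_succ']
      congr 1
      omega

end UpDown

theorem up_down_total (n : ℕ) :
    totalCount {(0, 1), (0, -1)} n = Nat.choose n (n / 2) := by
  rw [UpDown.totalCount_eq_sum_heightCount, ← UpDown.choose_half_succ_eq_choose_half]
  simpa using UpDown.sum_heightCount_eq_choose (n := n) (j := 0) (N := n + 1) (by omega)
end

section
/- The algebraic curve defined by P(T,t) = t⁵(3t−1)³T⁶ + 6t⁴(3t−1)³T⁵ + t³(3t−1)(135t²−78t+14)T⁴ + 4t²(3t−1)(45t²−18t+4)T³ + t(3t−1)(135t²−26t+9)T² + 2(3t−1)(27t²−2t+1)T + 43t² + t + 2 admits a rational parametrization: with a(u) = (u⁶+66u⁵+1827u⁴+27180u³+229431u²+1042866u+1995717)/((u+11)(u²+22u+125)²), T(u) = (u²+24u+151)a(u)/((u+9)(u²+24u+147)) and t(u) = 2/a(u), one has P(T(u), t(u)) = 0 identically as rational functions of u. -/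
noncomputable def u : RatFunc ℚ := RatFunc.X

/-- The rational function `a(u)` from the parametrization of the Kreweras curve. -/
noncomputable def aFn : RatFunc ℚ :=
  (u ^ 6 + 66 * u ^ 5 + 1827 * u ^ 4 + 27180 * u ^ 3 + 229431 * u ^ 2
      + 1042866 * u + 1995717) /
    ((u + 11) * (u ^ 2 + 22 * u + 125) ^ 2)

/-- The `T`-coordinate of the rational parametrization. -/
noncomputable def Tparam : RatFunc ℚ :=
  (u ^ 2 + 24 * u + 151) * aFn / ((u + 9) * (u ^ 2 + 24 * u + 147))

/-- The `t`-coordinate of the rational parametrization. -/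
noncomputable def tparam : RatFunc ℚ := 2 / aFn

/-- Cleared numerator of the Kreweras polynomial under `t = 2B/A`, `T = CA/(BD)`. -/
def NExpr {K : Type*} [CommRing K] (A B C D : K) : K :=
  172 * B^3 * D^6 + 1296 * B^3 * C * D^5 + 6480 * B^3 * C^2 * D^4 + 17280 * B^3 * C^3 * D^3 + 25920 * B^3 * C^4 * D^2 + 20736 * B^3 * C^5 * D + 6912 * B^3 * C^6 + 2 * A * B^2 * D^6 - 264 * A * B^2 * C * D^5 - 1704 * A * B^2 * C^2 * D^4 - 6336 * A * B^2 * C^3 * D^3 - 11808 * A * B^2 * C^4 * D^2 - 10368 * A * B^2 * C^5 * D - 3456 * A * B^2 * C^6 + 2 * A^2 * B * D^6 + 20 * A^2 * B * C * D^5 + 212 * A^2 * B * C^2 * D^4 + 960 * A^2 * B * C^3 * D^3 + 1920 * A^2 * B * C^4 * D^2 + 1728 * A^2 * B * C^5 * D + 576 * A^2 * B * C^6 - 2 * A^3 * C * D^5 - 18 * A^3 * C^2 * D^4 - 64 * A^3 * C^3 * D^3 - 112 * A^3 * C^4 * D^2 - 96 * A^3 * C^5 * D - 32 * A^3 * C^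6

/-- Generic polynomial identity: if `t * A = 2 * B` and `T * (B * D) = C * A`, then the
Kreweras polynomial evaluated at `(T, t)`, multiplied by `A^8 * B^6 * D^6`, equals
`NExpr A B C D * (A^6 * B^5)`. -/
lemma generic {K : Type*} [CommRing K] (A B C D t T : K)
    (ht : t * A = 2 * B) (hT : T * (B * D) = C * A) :
    (t ^ 5 * (3 * t - 1) ^ 3 * T ^ 6
      + 6 * t ^ 4 * (3 * t - 1) ^ 3 * T ^ 5
      + t ^ 3 * (3 * t - 1) * (135 * t ^ 2 - 78 * t + 14) * T ^ 4
      + 4 * t ^ 2 * (3 * t - 1) * (45 * t ^ 2 - 18 * t + 4) * T ^ 3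
      + t * (3 * t - 1) * (135 * t ^ 2 - 26 * t + 9) * T ^ 2
      + 2 * (3 * t - 1) * (27 * t ^ 2 - 2 * t + 1) * T
      + 43 * t ^ 2 + t + 2) * (A ^ 8 * B ^ 6 * D ^ 6)
      = NExpr A B C D * (A ^ 6 * B ^ 5) := by
  rw [NExpr]
  linear_combination (86 * A^6 * B^7 * D^6 + 1 * A^7 * B^6 * D^6 + 648 * T * A^5 * B^8 * D^6 - 132 * T * A^6 * B^7 * D^6 + 10 * T * A^7 * B^6 * D^6 + 3240 * T^2 * A^4 * B^9 * D^6 - 852 * T^2 * A^5 * B^8 * D^6 + 106 * T^2 * A^6 * B^7 * D^6 - 9 * T^2 * A^7 * B^6 * D^6 + 8640 * T^3 * A^3 * B^10 * D^6 - 3168 * T^3 * A^4 * B^9 * D^6 + 480 * T^3 * A^5 * B^8 * D^6 - 32 * T^3 * A^6 * B^7 * D^6 + 12960 * T^4 * A^2 * B^11 * D^6 - 5904 * T^4 * A^3 * B^10 * D^6 + 960 * T^4 * A^4 * B^9 * D^6 - 56 * T^4 * A^5 * B^8 * D^6 + 10368 * T^5 * A * B^12 * D^6 - 5184 * T^5 *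 A^2 * B^11 * D^6 + 864 * T^5 * A^3 * B^10 * D^6 - 48 * T^5 * A^4 * B^9 * D^6 + 3456 * T^6 * B^13 * D^6 - 1728 * T^6 * A * B^12 * D^6 + 288 * T^6 * A^2 * B^11 * D^6 - 16 * T^6 * A^3 * B^10 * D^6 + 43 * t * A^7 * B^6 * D^6 + 324 * t * T * A^6 * B^7 * D^6 - 66 * t * T * A^7 * B^6 * D^6 + 1620 * t * T^2 * A^5 * B^8 * D^6 - 426 * t * T^2 * A^6 * B^7 * D^6 + 53 * t * T^2 * A^7 * B^6 * D^6 + 4320 * t * T^3 * A^4 * B^9 * D^6 - 1584 * t * T^3 * A^5 * B^8 * D^6 + 240 * t * T^3 * A^6 * B^7 * D^6 - 16 * t * T^3 * A^7 * B^6 * D^6 + 6480 * t * T^4 * A^3 * B^10 * D^6 - 2952 * t * T^4 * A^4 * B^9 * D^6 + 480 * t * T^4 * A^5 * B^8 * D^6 - 28 * t * T^4 * A^6 * B^7 * D^6 + 5184 * t * T^5 * A^2 * B^11 * D^6 - 2592 * t * T^5 * A^3 * B^10 * D^6 + 432 * t * T^5 * A^4 * B^9 * D^6 - 24 * t * T^5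 * A^5 * B^8 * D^6 + 1728 * t * T^6 * A * B^12 * D^6 - 864 * t * T^6 * A^2 * B^11 * D^6 + 144 * t * T^6 * A^3 * B^10 * D^6 - 8 * t * T^6 * A^4 * B^9 * D^6 + 162 * t^2 * T * A^7 * B^6 * D^6 + 810 * t^2 * T^2 * A^6 * B^7 * D^6 - 213 * t^2 * T^2 * A^7 * B^6 * D^6 + 2160 * t^2 * T^3 * A^5 * B^8 * D^6 - 792 * t^2 * T^3 * A^6 * B^7 * D^6 + 120 * t^2 * T^3 * A^7 * B^6 * D^6 + 3240 * t^2 * T^4 * A^4 * B^9 * D^6 - 1476 * t^2 * T^4 * A^5 * B^8 * D^6 + 240 * t^2 * T^4 * A^6 * B^7 * D^6 - 14 * t^2 * T^4 * A^7 * B^6 * D^6 + 2592 * t^2 * T^5 * A^3 * B^10 * D^6 - 1296 * t^2 * T^5 * A^4 * B^9 * D^6 + 216 * t^2 * T^5 * A^5 * B^8 * D^6 - 12 * t^2 * T^5 * A^6 * B^7 * D^6 + 864 * t^2 * T^6 * A^2 * B^11 * D^6 - 432 * t^2 * T^6 * A^3 * B^10 * D^6 + 72 * t^2 * T^6 * A^4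 * B^9 * D^6 - 4 * t^2 * T^6 * A^5 * B^8 * D^6 + 405 * t^3 * T^2 * A^7 * B^6 * D^6 + 1080 * t^3 * T^3 * A^6 * B^7 * D^6 - 396 * t^3 * T^3 * A^7 * B^6 * D^6 + 1620 * t^3 * T^4 * A^5 * B^8 * D^6 - 738 * t^3 * T^4 * A^6 * B^7 * D^6 + 120 * t^3 * T^4 * A^7 * B^6 * D^6 + 1296 * t^3 * T^5 * A^4 * B^9 * D^6 - 648 * t^3 * T^5 * A^5 * B^8 * D^6 + 108 * t^3 * T^5 * A^6 * B^7 * D^6 - 6 * t^3 * T^5 * A^7 * B^6 * D^6 + 432 * t^3 * T^6 * A^3 * B^10 * D^6 - 216 * t^3 * T^6 * A^4 * B^9 * D^6 + 36 * t^3 * T^6 * A^5 * B^8 * D^6 - 2 * t^3 * T^6 * A^6 * B^7 * D^6 + 540 * t^4 * T^3 * A^7 * B^6 * D^6 + 810 * t^4 * T^4 * A^6 * B^7 * D^6 - 369 * t^4 * T^4 * A^7 * B^6 * D^6 + 648 * t^4 * T^5 * A^5 * B^8 * D^6 - 324 * t^4 * T^5 * A^6 * B^7 * D^6 + 54 * t^4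 * T^5 * A^7 * B^6 * D^6 + 216 * t^4 * T^6 * A^4 * B^9 * D^6 - 108 * t^4 * T^6 * A^5 * B^8 * D^6 + 18 * t^4 * T^6 * A^6 * B^7 * D^6 - 1 * t^4 * T^6 * A^7 * B^6 * D^6 + 405 * t^5 * T^4 * A^7 * B^6 * D^6 + 324 * t^5 * T^5 * A^6 * B^7 * D^6 - 162 * t^5 * T^5 * A^7 * B^6 * D^6 + 108 * t^5 * T^6 * A^5 * B^8 * D^6 - 54 * t^5 * T^6 * A^6 * B^7 * D^6 + 9 * t^5 * T^6 * A^7 * B^6 * D^6 + 162 * t^6 * T^5 * A^7 * B^6 * D^6 + 54 * t^6 * T^6 * A^6 * B^7 * D^6 - 27 * t^6 * T^6 * A^7 * B^6 * D^6 + 27 * t^7 * T^6 * A^7 * B^6 * D^6) * ht + (1296 * A^5 * B^8 * D^5 + 6480 * A^5 * B^8 * C * D^4 + 17280 * A^5 * B^8 * C^2 * D^3 + 25920 * A^5 * B^8 * C^3 * D^2 + 20736 * A^5 * B^8 * C^4 * D + 6912 * A^5 * B^8 * C^5 - 264 * A^6 * B^7 * D^5 - 1704 * A^6 * B^7 * C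 * D^4 - 6336 * A^6 * B^7 * C^2 * D^3 - 11808 * A^6 * B^7 * C^3 * D^2 - 10368 * A^6 * B^7 * C^4 * D - 3456 * A^6 * B^7 * C^5 + 20 * A^7 * B^6 * D^5 + 212 * A^7 * B^6 * C * D^4 + 960 * A^7 * B^6 * C^2 * D^3 + 1920 * A^7 * B^6 * C^3 * D^2 + 1728 * A^7 * B^6 * C^4 * D + 576 * A^7 * B^6 * C^5 - 2 * A^8 * B^5 * D^5 - 18 * A^8 * B^5 * C * D^4 - 64 * A^8 * B^5 * C^2 * D^3 - 112 * A^8 * B^5 * C^3 * D^2 - 96 * A^8 * B^5 * C^4 * D - 32 * A^8 * B^5 * C^5 + 6480 * T * A^4 * B^9 * D^5 + 17280 * T * A^4 * B^9 * C * D^4 + 25920 * T * A^4 * B^9 * C^2 * D^3 + 20736 * T * A^4 * B^9 * C^3 * D^2 + 6912 * T * A^4 * B^9 * C^4 * D - 1704 * T * A^5 * B^8 * D^5 - 6336 * T * A^5 * B^8 * C * D^4 - 11808 * T * A^5 * B^8 * C^2 * D^3 - 10368 * T * A^5 * B^8 * C^3 * D^2 - 3456 * T * A^5 * B^8 * C^4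 * D + 212 * T * A^6 * B^7 * D^5 + 960 * T * A^6 * B^7 * C * D^4 + 1920 * T * A^6 * B^7 * C^2 * D^3 + 1728 * T * A^6 * B^7 * C^3 * D^2 + 576 * T * A^6 * B^7 * C^4 * D - 18 * T * A^7 * B^6 * D^5 - 64 * T * A^7 * B^6 * C * D^4 - 112 * T * A^7 * B^6 * C^2 * D^3 - 96 * T * A^7 * B^6 * C^3 * D^2 - 32 * T * A^7 * B^6 * C^4 * D + 17280 * T^2 * A^3 * B^10 * D^5 + 25920 * T^2 * A^3 * B^10 * C * D^4 + 20736 * T^2 * A^3 * B^10 * C^2 * D^3 + 6912 * T^2 * A^3 * B^10 * C^3 * D^2 - 6336 * T^2 * A^4 * B^9 * D^5 - 11808 * T^2 * A^4 * B^9 * C * D^4 - 10368 * T^2 * A^4 * B^9 * C^2 * D^3 - 3456 * T^2 * A^4 * B^9 * C^3 * D^2 + 960 * T^2 * A^5 * B^8 * D^5 + 1920 * T^2 * A^5 * B^8 * C * D^4 + 1728 * T^2 * A^5 * B^8 * C^2 * D^3 + 576 * T^2 * A^5 * B^8 * C^3 * D^2 - 64 * T^2 * A^6 * B^7 * D^5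 - 112 * T^2 * A^6 * B^7 * C * D^4 - 96 * T^2 * A^6 * B^7 * C^2 * D^3 - 32 * T^2 * A^6 * B^7 * C^3 * D^2 + 25920 * T^3 * A^2 * B^11 * D^5 + 20736 * T^3 * A^2 * B^11 * C * D^4 + 6912 * T^3 * A^2 * B^11 * C^2 * D^3 - 11808 * T^3 * A^3 * B^10 * D^5 - 10368 * T^3 * A^3 * B^10 * C * D^4 - 3456 * T^3 * A^3 * B^10 * C^2 * D^3 + 1920 * T^3 * A^4 * B^9 * D^5 + 1728 * T^3 * A^4 * B^9 * C * D^4 + 576 * T^3 * A^4 * B^9 * C^2 * D^3 - 112 * T^3 * A^5 * B^8 * D^5 - 96 * T^3 * A^5 * B^8 * C * D^4 - 32 * T^3 * A^5 * B^8 * C^2 * D^3 + 20736 * T^4 * A * B^12 * D^5 + 6912 * T^4 * A * B^12 * C * D^4 - 10368 * T^4 * A^2 * B^11 * D^5 - 3456 * T^4 * A^2 * B^11 * C * D^4 + 1728 * T^4 * A^3 * B^10 * D^5 + 576 * T^4 * A^3 * B^10 * C * D^4 - 96 * T^4 * A^4 * B^9 * D^5 - 32 * T^4 * A^4 * B^9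 * C * D^4 + 6912 * T^5 * B^13 * D^5 - 3456 * T^5 * A * B^12 * D^5 + 576 * T^5 * A^2 * B^11 * D^5 - 32 * T^5 * A^3 * B^10 * D^5) * hT

lemma algMap_ne_zero (p : Polynomial ℚ) (h : Polynomial.eval 0 p ≠ 0) :
    algebraMap (Polynomial ℚ) (RatFunc ℚ) p ≠ 0 := by
  intro h0
  apply h
  have : p = 0 := IsFractionRing.injective (Polynomial ℚ) (RatFunc ℚ) (by simpa using h0)
  simp [this]

noncomputable def Au : RatFunc ℚ :=
  u ^ 6 + 66 * u ^ 5 + 1827 * u ^ 4 + 27180 * u ^ 3 + 229431 * u ^ 2 + 1042866 * u + 1995717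
noncomputable def Bu : RatFunc ℚ := (u + 11) * (u ^ 2 + 22 * u + 125) ^ 2
noncomputable def Cu : RatFunc ℚ := u ^ 2 + 24 * u + 151
noncomputable def Du : RatFunc ℚ := (u + 9) * (u ^ 2 + 24 * u + 147)

lemma hAu : Au ≠ 0 := by
  have := algMap_ne_zero (Polynomial.X ^ 6 + 66 * Polynomial.X ^ 5 + 1827 * Polynomial.X ^ 4
      + 27180 * Polynomial.X ^ 3 + 229431 * Polynomial.X ^ 2 + 1042866 * Polynomial.X + 1995717)
      (by norm_num)
  simpa [Au, u, map_add, map_mul, map_pow, map_ofNat] using this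

lemma hBu : Bu ≠ 0 := by
  have h1 := algMap_ne_zero (Polynomial.X + 11) (by norm_num)
  have h2 := algMap_ne_zero (Polynomial.X ^ 2 + 22 * Polynomial.X + 125) (by norm_num)
  simp only [map_add, map_mul, map_pow, map_ofNat, RatFunc.algebraMap_X] at h1 h2
  simp only [Bu, u]
  exact mul_ne_zero h1 (pow_ne_zero 2 h2)

lemma hDu : Du ≠ 0 := by
  have h1 := algMap_ne_zero (Polynomial.X + 9) (by norm_num)
  have h2 := algMap_ne_zero (Polynomial.X ^ 2 + 24 * Polynomial.X + 147) (by norm_num)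
  simp only [map_add, map_mul, map_pow, map_ofNat, RatFunc.algebraMap_X] at h1 h2
  simp only [Du, u]
  exact mul_ne_zero h1 h2

lemma hN : NExpr Au Bu Cu Du = 0 := by
  simp only [NExpr, Au, Bu, Cu, Du]
  ring

lemma ht' : tparam * Au = 2 * Bu := by
  rw [tparam, aFn, ← Au, ← Bu]
  field_simp [hAu, hBu, hDu]

lemma hT' : Tparam * (Bu * Du) = Cu * Au := by
  rw [Tparam, aFn, ← Au, ← Bu, ← Cu, ← Du]
  field_simp [hAu, hBu, hDu]

theorem kreweras_curve_rational_parametrization :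
    tparam ^ 5 * (3 * tparam - 1) ^ 3 * Tparam ^ 6
      + 6 * tparam ^ 4 * (3 * tparam - 1) ^ 3 * Tparam ^ 5
      + tparam ^ 3 * (3 * tparam - 1) * (135 * tparam ^ 2 - 78 * tparam + 14) * Tparam ^ 4
      + 4 * tparam ^ 2 * (3 * tparam - 1) * (45 * tparam ^ 2 - 18 * tparam + 4) * Tparam ^ 3
      + tparam * (3 * tparam - 1) * (135 * tparam ^ 2 - 26 * tparam + 9) * Tparam ^ 2
      + 2 * (3 * tparam - 1) * (27 * tparam ^ 2 - 2 * tparam + 1) * Tparam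
      + 43 * tparam ^ 2 + tparam + 2 = 0 := by
  have key := generic Au Bu Cu Du tparam Tparam ht' hT'
  rw [hN, zero_mul] at key
  have hM : (Au ^ 8 * Bu ^ 6 * Du ^ 6 : RatFunc ℚ) ≠ 0 :=
    mul_ne_zero (mul_ne_zero (pow_ne_zero _ hAu) (pow_ne_zero _ hBu)) (pow_ne_zero _ hDu)
  exact (mul_eq_zero.mp key).resolve_right hM
end

section
/- If S(t) = Σ a_n t^n ∈ ℚ[[t]] is algebraic over ℚ(t), i.e., there is a nonzero polynomial P ∈ ℚ[T,t] with P(S(t),t) = 0, then there exists a positive integer C such that a_n · C^{n+1} ∈ ℤ for all n (Eisenstein's theorem). -/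
/-!
Among the polynomials annihilating `S`, one of minimal degree `Q` has `Q'(S) ≠ 0`; let `c t^h`
be the lowest-order term of `Q'(S)`. Split `S = A + t^m R` with `A` the truncation of `S` and
`m = h + 2`.
Taylor expansion of `Q` at the polynomial `A` gives `Q(A + t^m Y) = t^(m+h) (c Y + H(t Y))` with
`H` a polynomial whose coefficients have bounded denominators, say cleared by `d`. After the
substitution `t ↦ e t` with `e = c d`, the series `e R(e t)` becomes a fixed point `f = Φ(t f)` of a
polynomial `Φ` with integral coefficients, and such a fixed point is integral since its `n`-th
coefficient only depends on the earlier ones. This gives `r_n e^(n+1) ∈ ℤ`.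
-/

open PowerSeries
open scoped Polynomial

namespace Subring

variable {B : Type*} [CommRing B] (T : Subring B)

def powerSeries : Subring B⟦X⟧ where
  carrier := {f | ∀ n, coeff n f ∈ T}
  mul_mem' {f g} hf hg n := by
    rw [coeff_mul]
    exact sum_mem fun p _ => mul_mem (hf p.1) (hg p.2)
  one_mem' n := by
    rw [coeff_one]
    split_ifs
    exacts [one_mem T, zero_mem T]
  add_mem' hf hg n := by
    rw [map_add]
    exact add_mem (hf n) (hg n)
  zero_mem' n := by
    rw [map_zero]
    exact zero_mem T
  neg_mem' hf n := by
    rw [map_neg]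
    exact neg_mem (hf n)

variable {T}

theorem C_mem_powerSeries {a : B} (ha : a ∈ T) : C a ∈ T.powerSeries := fun n => by
  rw [coeff_C]
  split_ifs
  exacts [ha, zero_mem T]

theorem X_mem_powerSeries : (X : B⟦X⟧) ∈ T.powerSeries := fun n => by
  rw [coeff_X]
  split_ifs
  exacts [one_mem T, zero_mem T]

theorem mem_powerSeries_of_X_pow_mul_mem {f : B⟦X⟧} (k : ℕ) (h : X ^ k * f ∈ T.powerSeries) :
    f ∈ T.powerSeries := fun n => by
  simpa using h (n + k)

end Subring

theorem Polynomial.eval_mem_of_coeff_mem {K : Type*} [CommRing K] {Z : Subring K} {p : K[X]}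
    (hp : ∀ i, p.coeff i ∈ Z) {x : K} (hx : x ∈ Z) : p.eval x ∈ Z := by
  rw [Polynomial.eval_eq_sum_range]
  exact sum_mem fun i _ => mul_mem (hp i) (pow_mem hx i)

namespace PowerSeries

variable {B : Type*} [CommRing B] {T : Subring B}

theorem mem_powerSeries_of_eq_eval_X_mul {Φ : B⟦X⟧[X]}
    (hΦ : ∀ i, Φ.coeff i ∈ T.powerSeries) {f : B⟦X⟧} (hf : f = Φ.eval (X * f)) :
    f ∈ T.powerSeries := by
  have approx : ∀ n, ∃ g ∈ T.powerSeries, X ^ n ∣ f - g := by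
    intro n
    induction n with
    | zero => exact ⟨0, zero_mem _, by simp⟩
    | succ n ih =>
      obtain ⟨g, hg, hfg⟩ := ih
      refine ⟨Φ.eval (X * g),
        Polynomial.eval_mem_of_coeff_mem hΦ (mul_mem Subring.X_mem_powerSeries hg), ?_⟩
      have hXfg : X ^ (n + 1) ∣ X * f - X * g := by
        rw [← mul_sub, pow_succ']
        exact mul_dvd_mul_left X hfg
      rw [hf]
      exact hXfg.trans (Polynomial.sub_dvd_eval_sub _ _ _)
  intro n
  obtain ⟨g, hg, hfg⟩ := approx (n + 1)
  have hcoeff := X_pow_dvd_iff.mp hfg n n.lt_succ_self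
  rw [map_sub, sub_eq_zero] at hcoeff
  exact hcoeff ▸ hg n

theorem rescale_C (a b : B) : rescale a (C b) = C b := by
  ext n
  rw [coeff_rescale, coeff_C]
  by_cases hn : n = 0 <;> simp [hn]

theorem coeff_mul_pow_succ_mem_of_C_mul_add_eval_X_mul_eq_zero {c d : B}
    (hcd : c * d ∈ T) {H : B⟦X⟧[X]} (hH : ∀ j, C d * H.coeff j ∈ T.powerSeries) {r : B⟦X⟧}
    (hr : C c * r + H.eval (X * r) = 0) (n : ℕ) : coeff n r * (c * d) ^ (n + 1) ∈ T := by
  set ρ := rescale (c * d)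
  -- `r' = e r(e X)` with `e = c d` solves `r' = Φ(X r')` for `Φ = -d H(e X)`, integral by `hH`.
  set r' := C (c * d) * ρ r
  have hρ : C c * ρ r + (H.map ρ).eval (X * r') = 0 := by
    have := congrArg ρ hr
    rwa [map_add, map_mul, rescale_C, ← Polynomial.eval_map_apply, map_mul, rescale_X, map_zero,
      mul_comm (C (c * d)) X, mul_assoc] at this
  have hfix : r' = (Polynomial.C (-C d) * H.map ρ).eval (X * r') := by
    have hr' : r' = C c * C d * ρ r := by rw [← map_mul]
    rw [Polynomial.eval_mul, Polynomial.eval_C]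
    linear_combination C d * hρ + hr'
  have hΦ (j : ℕ) : (Polynomial.C (-C d) * H.map ρ).coeff j ∈ T.powerSeries := by
    rw [Polynomial.coeff_C_mul, Polynomial.coeff_map, neg_mul]
    refine neg_mem fun k => ?_
    rw [coeff_C_mul, coeff_rescale, mul_left_comm, ← coeff_C_mul]
    exact mul_mem (pow_mem hcd k) (hH j k)
  have hmem := mem_powerSeries_of_eq_eval_X_mul hΦ hfix n
  rwa [coeff_C_mul, coeff_rescale, ← mul_assoc, ← pow_succ', mul_comm] at hmem

theorem exists_coeff_eq_X_pow_mul {G : B⟦X⟧[X]} {k : ℕ}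
    (hG : ∀ j, X ^ (k + j) ∣ G.coeff j) :
    ∃ H : B⟦X⟧[X], ∀ j, G.coeff j = X ^ (k + j) * H.coeff j := by
  classical
  choose q hq using hG
  refine ⟨∑ j ∈ G.support, Polynomial.monomial j (q j), fun j => ?_⟩
  simp only [Polynomial.finsetSum_coeff, Polynomial.coeff_monomial, Finset.sum_ite_eq']
  split_ifs with hj
  · exact hq j
  · rw [Polynomial.notMem_support_iff.mp hj, mul_zero]

/-- `hG` says that `G(Y) = X^k (c Y + H(X Y))` for some `H`. -/
theorem coeff_mul_pow_succ_mem_of_eval_eq_zero {G : B⟦X⟧[X]} {r : B⟦X⟧}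
    (hr : G.eval r = 0) {c d : B} {k : ℕ}
    (hG : ∀ j, X ^ (k + j) ∣ (G - Polynomial.C (C c * X ^ k) * Polynomial.X).coeff j)
    (hGT : ∀ j, C d * G.coeff j ∈ T.powerSeries) :
    c * d ∈ T ∧ ∀ n, coeff n r * (c * d) ^ (n + 1) ∈ T := by
  obtain ⟨H, hH⟩ := exists_coeff_eq_X_pow_mul hG
  have hG1 : G.coeff 1 = C c * X ^ k + X ^ (k + 1) * H.coeff 1 := by
    rw [← hH 1, Polynomial.coeff_sub, Polynomial.coeff_C_mul_X, if_pos rfl, add_sub_cancel]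
  have hcd : c * d ∈ T := by
    simpa [hG1, mul_add, coeff_X_pow_mul', mul_comm d c] using hGT 1 k
  have hHT (j : ℕ) : C d * H.coeff j ∈ T.powerSeries := by
    refine Subring.mem_powerSeries_of_X_pow_mul_mem (k + j) ?_
    rw [mul_left_comm, ← hH j, Polynomial.coeff_sub, Polynomial.coeff_C_mul_X, mul_sub]
    refine sub_mem (hGT j) ?_
    split_ifs
    · rw [← mul_assoc, ← map_mul, mul_comm d c]
      exact mul_mem (Subring.C_mem_powerSeries hcd) (pow_mem Subring.X_mem_powerSeries k)
    · rw [mul_zero]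
      exact zero_mem _
  have hGH : G - Polynomial.C (C c * X ^ k) * Polynomial.X =
      Polynomial.C (X ^ k) * H.comp (Polynomial.C X * Polynomial.X) := by
    ext1 j
    rw [hH j, Polynomial.coeff_C_mul, Polynomial.comp_C_mul_X_coeff, pow_add]
    ring
  have hr' : C c * r + H.eval (X * r) = 0 := by
    refine X_pow_mul_cancel (k := k) ?_
    have := congrArg (Polynomial.eval r) hGH
    simp only [Polynomial.eval_sub, Polynomial.eval_mul, Polynomial.eval_C, Polynomial.eval_X,
      Polynomial.eval_comp, hr] at this
    linear_combination -this
  exact ⟨hcd, coeff_mul_pow_succ_mem_of_C_mul_add_eval_X_mul_eq_zero hcd hHT hr'⟩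

theorem exists_X_pow_succ_dvd_sub_C_mul_X_pow {s : B⟦X⟧} (hs : s ≠ 0) :
    ∃ (h : ℕ) (c : B), c ≠ 0 ∧ X ^ (h + 1) ∣ s - C c * X ^ h := by
  refine ⟨s.order.toNat, coeff s.order.toNat s, coeff_order hs, X_pow_dvd_iff.mpr fun i hi => ?_⟩
  rw [map_sub, coeff_C_mul_X_pow]
  rcases (Nat.lt_succ_iff.mp hi).lt_or_eq with hi | rfl
  · rw [if_neg hi.ne, coeff_of_lt_order_toNat _ hi, sub_zero]
  · rw [if_pos rfl, sub_self]

/-- Coefficientwise, `P(A + X^m Y) = X^(m+h) (c Y + H(X Y))` for some `H`. -/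
theorem X_pow_dvd_coeff_taylor_comp {P : B⟦X⟧[X]} {S A R : B⟦X⟧} {c : B} {h m : ℕ}
    (hPS : P.eval S = 0) (hc : X ^ (h + 1) ∣ P.derivative.eval S - C c * X ^ h)
    (hm : h + 2 ≤ m) (hS : S = X ^ m * R + A) (j : ℕ) :
    X ^ (m + h + j) ∣ ((Polynomial.taylor A P).comp (Polynomial.C (X ^ m) * Polynomial.X) -
      Polynomial.C (C c * X ^ (m + h)) * Polynomial.X).coeff j := by
  rw [Polynomial.coeff_sub, Polynomial.comp_C_mul_X_coeff, Polynomial.coeff_C_mul_X]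
  have hXR : X ^ m ∣ -(X ^ m * R) := (Dvd.intro R rfl).neg_right
  have hAS : A = S + -(X ^ m * R) := by rw [hS]; ring
  match j with
  | 0 =>
    rw [Polynomial.taylor_coeff_zero, if_neg zero_ne_one, sub_zero, pow_zero, mul_one, add_zero]
    have hX : X ^ h ∣ P.derivative.eval S := by
      have := dvd_add ((pow_dvd_pow X h.le_succ).trans hc) (dvd_mul_left (X ^ h) (C c))
      rwa [sub_add_cancel] at this
    obtain ⟨q, hq⟩ := Polynomial.binomExpansion P S (-(X ^ m * R))
    rw [hAS, hq, hPS, zero_add]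
    refine dvd_add ?_ (Dvd.dvd.mul_left ?_ q)
    · rw [add_comm m h, pow_add]
      exact mul_dvd_mul hX hXR
    · refine (pow_dvd_pow X (by omega : m + h ≤ m * 2)).trans ?_
      rw [pow_mul]
      exact pow_dvd_pow_of_dvd hXR 2
  | 1 =>
    rw [Polynomial.taylor_coeff_one, if_pos rfl, pow_one]
    have hA : X ^ (h + 1) ∣ P.derivative.eval A - P.derivative.eval S := by
      refine (pow_dvd_pow X (by omega : h + 1 ≤ m)).trans
        (Dvd.dvd.trans ?_ (Polynomial.sub_dvd_eval_sub _ _ _))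
      rwa [hAS, add_sub_cancel_left]
    have hsplit : P.derivative.eval A * X ^ m - C c * X ^ (m + h) =
        X ^ m * (P.derivative.eval A - P.derivative.eval S +
          (P.derivative.eval S - C c * X ^ h)) := by
      ring
    rw [hsplit, add_assoc, pow_add]
    exact mul_dvd_mul_left _ (dvd_add hA hc)
  | j + 2 =>
    rw [if_neg (by omega), sub_zero, ← pow_mul]
    exact Dvd.dvd.mul_left (pow_dvd_pow X (by nlinarith)) _

theorem coeff_X_pow_mul_add_mul_pow_succ_mem {d e : B} (hd : d ∈ T) (he : e ∈ T) {a : B[X]}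
    (ha : ∀ n, d * a.coeff n ∈ T) {R : B⟦X⟧} (hR : ∀ n, coeff n R * e ^ (n + 1) ∈ T) (m n : ℕ) :
    coeff n (X ^ m * R + (a : B⟦X⟧)) * (d * e) ^ (n + 1) ∈ T := by
  rw [map_add, Polynomial.coeff_coe, add_mul, coeff_X_pow_mul']
  refine add_mem ?_ ?_
  · split_ifs with hmn
    · obtain ⟨k, rfl⟩ := Nat.exists_eq_add_of_le hmn
      rw [Nat.add_sub_cancel_left, show (d * e) ^ (m + k + 1) =
        e ^ (k + 1) * (d ^ (m + k + 1) * e ^ m) by ring, ← mul_assoc]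
      exact mul_mem (hR k) (mul_mem (pow_mem hd _) (pow_mem he m))
    · rw [zero_mul]
      exact zero_mem T
  · rw [show a.coeff n * (d * e) ^ (n + 1) = d * a.coeff n * (d ^ n * e ^ (n + 1)) by ring]
    exact mul_mem (ha n) (mul_mem (pow_mem hd n) (pow_mem he _))

end PowerSeries

theorem Polynomial.exists_eval₂_eq_zero_and_derivative_ne_zero {A B : Type*} [Semiring A]
    [IsAddTorsionFree A] [Semiring B] {f : A →+* B} (hf : Function.Injective f) {x : B}
    {P : A[X]} (hP : P ≠ 0) (hPx : P.eval₂ f x = 0) :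
    ∃ Q : A[X], Q.eval₂ f x = 0 ∧ Q.derivative.eval₂ f x ≠ 0 := by
  induction hn : P.natDegree using Nat.strong_induction_on generalizing P with
  | _ n ih =>
  by_cases hP' : P.derivative.eval₂ f x = 0
  · have hdeg : P.natDegree ≠ 0 := by
      intro h0
      rw [Polynomial.eq_C_of_natDegree_eq_zero h0, Polynomial.eval₂_C, ← map_zero f] at hPx
      exact hP (by rw [Polynomial.eq_C_of_natDegree_eq_zero h0, hf hPx, map_zero])
    exact ih _ (hn ▸ Polynomial.natDegree_derivative_lt hdeg)
      (Polynomial.derivative_ne_zero.mpr hdeg) hP' rfl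
  · exact ⟨P, hPx, hP'⟩

theorem Rat.exists_nat_mul_mem_bot {ι : Type*} (s : Finset ι) (q : ι → ℚ) :
    ∃ d : ℕ, 0 < d ∧ ∀ i ∈ s, (d : ℚ) * q i ∈ (⊥ : Subring ℚ) := by
  classical
  refine ⟨∏ i ∈ s, (q i).den, Finset.prod_pos fun i _ => (q i).den_pos, fun i hi => ?_⟩
  rw [← Finset.mul_prod_erase s _ hi, Nat.cast_mul, mul_right_comm, Rat.den_mul_eq_num]
  exact mul_mem (intCast_mem _ _) (natCast_mem _ _)

theorem Polynomial.exists_nat_mul_coeff_coeff_mem_bot (F : ℚ[X][X]) :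
    ∃ d : ℕ, 0 < d ∧ ∀ j n, (d : ℚ) * (F.coeff j).coeff n ∈ (⊥ : Subring ℚ) := by
  obtain ⟨d, hd, hdF⟩ := Rat.exists_nat_mul_mem_bot
    (F.support.sigma fun j => (F.coeff j).support) fun p => (F.coeff p.1).coeff p.2
  refine ⟨d, hd, fun j n => ?_⟩
  by_cases h : (F.coeff j).coeff n = 0
  · rw [h, mul_zero]
    exact zero_mem _
  · refine hdF ⟨j, n⟩ (Finset.mem_sigma.mpr ⟨?_, Polynomial.mem_support_iff.mpr h⟩)
    exact Polynomial.mem_support_iff.mpr fun h0 => h (by rw [h0, Polynomial.coeff_zero])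

theorem Polynomial.exists_nat_mul_coeff_mem_bot (p : ℚ[X]) :
    ∃ d : ℕ, 0 < d ∧ ∀ n, (d : ℚ) * p.coeff n ∈ (⊥ : Subring ℚ) := by
  obtain ⟨d, hd, hdp⟩ := exists_nat_mul_coeff_coeff_mem_bot (Polynomial.C p)
  exact ⟨d, hd, fun n => by simpa using hdp 0 n⟩

theorem PowerSeries.exists_coeff_mul_pow_succ_mem_bot {S : ℚ⟦X⟧} {Q : ℚ[X][X]}
    (hQ : Q.eval₂ Polynomial.coeToPowerSeries.ringHom S = 0)
    (hQ' : Q.derivative.eval₂ Polynomial.coeToPowerSeries.ringHom S ≠ 0) :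
    ∃ x : ℚ, x ≠ 0 ∧ x ∈ (⊥ : Subring ℚ) ∧ ∀ n, coeff n S * x ^ (n + 1) ∈ (⊥ : Subring ℚ) := by
  set φ := Polynomial.coeToPowerSeries.ringHom (R := ℚ)
  rw [← Polynomial.eval_map] at hQ hQ'
  rw [← Polynomial.derivative_map] at hQ'
  obtain ⟨h, c, hc0, hc⟩ := exists_X_pow_succ_dvd_sub_C_mul_X_pow hQ'
  set m := h + 2
  set A := trunc m S
  set R := mk fun i => coeff (i + m) S
  have hS : S = X ^ m * R + (A : ℚ⟦X⟧) := eq_X_pow_mul_shift_add_trunc m S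
  set G := (Polynomial.taylor A Q).comp (Polynomial.C (Polynomial.X ^ m) * Polynomial.X)
  have hG : G.map φ =
      (Polynomial.taylor (A : ℚ⟦X⟧) (Q.map φ)).comp (Polynomial.C (X ^ m) * Polynomial.X) := by
    simp [G, φ, Polynomial.map_comp]
  have hGR : (G.map φ).eval R = 0 := by
    rw [hG, Polynomial.eval_comp]
    simp [Polynomial.taylor_eval, ← hS, hQ]
  obtain ⟨d₁, hd₁, hGd⟩ := Polynomial.exists_nat_mul_coeff_coeff_mem_bot G
  obtain ⟨d₂, hd₂, hAd⟩ := Polynomial.exists_nat_mul_coeff_mem_bot A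
  obtain ⟨hcd, hR⟩ := coeff_mul_pow_succ_mem_of_eval_eq_zero (k := m + h) hGR
    (fun j => hG ▸ X_pow_dvd_coeff_taylor_comp hQ hc le_rfl hS j)
    (fun j n => by simpa [φ, coeff_C_mul] using hGd j n)
  refine ⟨d₂ * (c * d₁), by positivity, mul_mem (natCast_mem _ _) hcd, fun n => ?_⟩
  rw [hS]
  exact coeff_X_pow_mul_add_mul_pow_succ_mem (natCast_mem _ d₂) hcd hAd hR m n

/-- Eisenstein's theorem: an algebraic power series with rational coefficients has
coefficients with at most geometrically growing denominators. -/
theorem eisenstein_theorem (S : PowerSeries ℚ)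
    (P : Polynomial (Polynomial ℚ)) (hP : P ≠ 0)
    (hPS : Polynomial.eval₂ Polynomial.coeToPowerSeries.ringHom S P = 0) :
    ∃ C : ℕ, 0 < C ∧ ∀ n : ℕ, ∃ m : ℤ,
      PowerSeries.coeff n S * (C : ℚ) ^ (n + 1) = (m : ℚ) := by
  obtain ⟨Q, hQ, hQ'⟩ :=
    Polynomial.exists_eval₂_eq_zero_and_derivative_ne_zero (Polynomial.coe_injective ℚ) hP hPS
  obtain ⟨x, hx0, hx, hS⟩ := exists_coeff_mul_pow_succ_mem_bot hQ hQ'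
  obtain ⟨z, rfl⟩ := Subring.mem_bot.mp hx
  refine ⟨z.natAbs, Int.natAbs_pos.mpr (by exact_mod_cast hx0), fun n => ?_⟩
  obtain ⟨k, hk⟩ := Subring.mem_bot.mp (hS n)
  have habs : (z.natAbs : ℚ) = z.sign * z := by
    rw [Nat.cast_natAbs, ← Int.sign_mul_self_eq_abs, Int.cast_mul]
  refine ⟨z.sign ^ (n + 1) * k, ?_⟩
  rw [habs, mul_pow, mul_left_comm, ← hk]
  push_cast
  ring
end
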